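/- arXiv:1608.03815 — 3 statements merged into one kernel-verified Lean document; each statement's English description precedes it below -/
import Mathlib

section
/- For the uniform distribution on the unit disc, the four points (±4/(3π), ±4/(3π)) are the centroids of the four quadrant sectors, and the total distortion error of this four-point configuration, with Voronoi regions the four quadrants of the disc, equals (9π² − 64)/(18π²). -/
open Real MeasureTheory intervalIntegral

/-- First coordinate of the centroid of the sector of the unit disc between angles `a` and `b`,
with respect to the uniform density `1/π`. -/
noncomputable def sectorCentroidX (a b : ℝ) : ℝ :=
  (∫ r in (0:ℝ)..1, ∫ θ in a..b, (r / π) * (r * Real.cos θ)) /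
    (∫ r in (0:ℝ)..1, ∫ θ in a..b, r / π)

/-- Second coordinate of the centroid of the sector of the unit disc between angles `a` and `b`. -/
noncomputable def sectorCentroidY (a b : ℝ) : ℝ :=
  (∫ r in (0:ℝ)..1, ∫ θ in a..b, (r / π) * (r * Real.sin θ)) /
    (∫ r in (0:ℝ)..1, ∫ θ in a..b, r / π)


lemma numX (a b : ℝ) : (∫ r in (0:ℝ)..1, ∫ θ in a..b, (r / π) * (r * Real.cos θ))
    = (Real.sin b - Real.sin a) / (3 * π) := by
  have h : ∀ r : ℝ, (∫ θ in a..b, (r / π) * (r * Real.cos θ))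
      = (Real.sin b - Real.sin a) / π * r ^ 2 := by
    intro r
    have : ∀ θ : ℝ, (r / π) * (r * Real.cos θ) = (r ^ 2 / π) * Real.cos θ := fun θ => by ring
    simp only [this, intervalIntegral.integral_const_mul, integral_cos]
    ring
  simp only [h, intervalIntegral.integral_const_mul, integral_pow]
  ring

lemma numY (a b : ℝ) : (∫ r in (0:ℝ)..1, ∫ θ in a..b, (r / π) * (r * Real.sin θ))
    = (Real.cos a - Real.cos b) / (3 * π) := by
  have h : ∀ r : ℝ, (∫ θ in a..b, (r / π) * (r * Real.sin θ))
      = (Real.cos a - Real.cos b) / π * r ^ 2 := by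
    intro r
    have : ∀ θ : ℝ, (r / π) * (r * Real.sin θ) = (r ^ 2 / π) * Real.sin θ := fun θ => by ring
    simp only [this, intervalIntegral.integral_const_mul, integral_sin]
    ring
  simp only [h, intervalIntegral.integral_const_mul, integral_pow]
  ring

lemma denom (a b : ℝ) : (∫ r in (0:ℝ)..1, ∫ θ in a..b, r / π) = (b - a) / (2 * π) := by
  have h : (fun r : ℝ => (∫ θ in a..b, r / π)) = fun r => (b - a) / π * r := by
    funext r
    rw [intervalIntegral.integral_const, smul_eq_mul]
    ring
  rw [show (∫ r in (0:ℝ)..1, ∫ θ in a..b, r / π) = ∫ r in (0:ℝ)..1, (b - a) / π * r from by rw [← h],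
    intervalIntegral.integral_const_mul, integral_id]
  ring

lemma sin_three_pi_div_two' : Real.sin (3 * π / 2) = -1 := by
  have : (3 * π / 2 : ℝ) = π + π / 2 := by ring
  rw [this, Real.sin_add, Real.sin_pi, Real.cos_pi, Real.sin_pi_div_two]
  ring

lemma cos_three_pi_div_two' : Real.cos (3 * π / 2) = 0 := by
  have : (3 * π / 2 : ℝ) = π + π / 2 := by ring
  rw [this, Real.cos_add, Real.sin_pi, Real.cos_pi, Real.cos_pi_div_two]
  ring

lemma min_four (c x y : ℝ) (hc : 0 ≤ c) :
    min (min ((x - c) ^ 2 + (y - c) ^ 2) ((x + c) ^ 2 + (y - c) ^ 2))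
      (min ((x + c) ^ 2 + (y + c) ^ 2) ((x - c) ^ 2 + (y + c) ^ 2))
    = x ^ 2 + y ^ 2 + 2 * c ^ 2 - 2 * c * (|x| + |y|) := by
  rcases le_total 0 x with hx | hx <;> rcases le_total 0 y with hy | hy
  · rw [abs_of_nonneg hx, abs_of_nonneg hy,
      min_eq_left (by nlinarith [mul_nonneg hc hx] :
        (x - c) ^ 2 + (y - c) ^ 2 ≤ (x + c) ^ 2 + (y - c) ^ 2),
      min_eq_right (by nlinarith [mul_nonneg hc hx] :
        (x - c) ^ 2 + (y + c) ^ 2 ≤ (x + c) ^ 2 + (y + c) ^ 2),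
      min_eq_left (by nlinarith [mul_nonneg hc hy] :
        (x - c) ^ 2 + (y - c) ^ 2 ≤ (x - c) ^ 2 + (y + c) ^ 2)]
    ring
  · rw [abs_of_nonneg hx, abs_of_nonpos hy,
      min_eq_left (by nlinarith [mul_nonneg hc hx] :
        (x - c) ^ 2 + (y - c) ^ 2 ≤ (x + c) ^ 2 + (y - c) ^ 2),
      min_eq_right (by nlinarith [mul_nonneg hc hx] :
        (x - c) ^ 2 + (y + c) ^ 2 ≤ (x + c) ^ 2 + (y + c) ^ 2),
      min_eq_right (by nlinarith [mul_nonneg hc (neg_nonneg.mpr hy)] :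
        (x - c) ^ 2 + (y + c) ^ 2 ≤ (x - c) ^ 2 + (y - c) ^ 2)]
    ring
  · rw [abs_of_nonpos hx, abs_of_nonneg hy,
      min_eq_right (by nlinarith [mul_nonneg hc (neg_nonneg.mpr hx)] :
        (x + c) ^ 2 + (y - c) ^ 2 ≤ (x - c) ^ 2 + (y - c) ^ 2),
      min_eq_left (by nlinarith [mul_nonneg hc (neg_nonneg.mpr hx)] :
        (x + c) ^ 2 + (y + c) ^ 2 ≤ (x - c) ^ 2 + (y + c) ^ 2),
      min_eq_left (by nlinarith [mul_nonneg hc hy] :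
        (x + c) ^ 2 + (y - c) ^ 2 ≤ (x + c) ^ 2 + (y + c) ^ 2)]
    ring
  · rw [abs_of_nonpos hx, abs_of_nonpos hy,
      min_eq_right (by nlinarith [mul_nonneg hc (neg_nonneg.mpr hx)] :
        (x + c) ^ 2 + (y - c) ^ 2 ≤ (x - c) ^ 2 + (y - c) ^ 2),
      min_eq_left (by nlinarith [mul_nonneg hc (neg_nonneg.mpr hx)] :
        (x + c) ^ 2 + (y + c) ^ 2 ≤ (x - c) ^ 2 + (y + c) ^ 2),
      min_eq_right (by nlinarith [mul_nonneg hc (neg_nonneg.mpr hy)] :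
        (x + c) ^ 2 + (y + c) ^ 2 ≤ (x + c) ^ 2 + (y - c) ^ 2)]
    ring

lemma int_abs_sin : (∫ θ in (-π)..π, |Real.sin θ|) = 4 := by
  have h1 : (∫ θ in (-π)..(0:ℝ), |Real.sin θ|) = 2 := by
    rw [intervalIntegral.integral_congr (g := fun θ => -Real.sin θ)
      (fun θ hθ => by
        rw [Set.uIcc_of_le (by linarith [Real.pi_pos] : (-π:ℝ) ≤ 0)] at hθ
        exact abs_of_nonpos (Real.sin_nonpos_of_nonpos_of_neg_pi_le hθ.2 hθ.1)),
      intervalIntegral.integral_neg, integral_sin]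
    norm_num [Real.cos_neg, Real.cos_pi]
  have h2 : (∫ θ in (0:ℝ)..π, |Real.sin θ|) = 2 := by
    rw [intervalIntegral.integral_congr (g := fun θ => Real.sin θ)
      (fun θ hθ => by
        rw [Set.uIcc_of_le Real.pi_nonneg] at hθ
        exact abs_of_nonneg (Real.sin_nonneg_of_nonneg_of_le_pi hθ.1 hθ.2)),
      integral_sin]
    norm_num [Real.cos_pi]
  rw [← intervalIntegral.integral_add_adjacent_intervals (b := (0:ℝ))
    ((Real.continuous_sin.abs).intervalIntegrable _ _)
    ((Real.continuous_sin.abs).intervalIntegrable _ _), h1, h2]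
  norm_num

lemma int_abs_cos : (∫ θ in (-π)..π, |Real.cos θ|) = 4 := by
  have hp := Real.pi_pos
  have h1 : (∫ θ in (-π)..(-(π/2):ℝ), |Real.cos θ|) = 1 := by
    rw [intervalIntegral.integral_congr (g := fun θ => -Real.cos θ)
      (fun θ hθ => by
        rw [Set.uIcc_of_le (by linarith : (-π:ℝ) ≤ -(π/2))] at hθ
        have hnp : Real.cos θ ≤ 0 := by
          rw [← Real.cos_neg]
          exact Real.cos_nonpos_of_pi_div_two_le_of_le (by linarith [hθ.2])
            (by linarith [hθ.1])
        exact abs_of_nonpos hnp),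
      intervalIntegral.integral_neg, integral_cos]
    norm_num [Real.sin_neg, Real.sin_pi_div_two, Real.sin_pi]
  have h2 : (∫ θ in (-(π/2):ℝ)..(π/2), |Real.cos θ|) = 2 := by
    rw [intervalIntegral.integral_congr (g := fun θ => Real.cos θ)
      (fun θ hθ => by
        rw [Set.uIcc_of_le (by linarith : (-(π/2):ℝ) ≤ π/2)] at hθ
        exact abs_of_nonneg (Real.cos_nonneg_of_mem_Icc ⟨hθ.1, hθ.2⟩)),
      integral_cos]
    norm_num [Real.sin_neg, Real.sin_pi_div_two]
  have h3 : (∫ θ in (π/2:ℝ)..π, |Real.cos θ|) = 1 := by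
    rw [intervalIntegral.integral_congr (g := fun θ => -Real.cos θ)
      (fun θ hθ => by
        rw [Set.uIcc_of_le (by linarith : (π/2:ℝ) ≤ π)] at hθ
        exact abs_of_nonpos (Real.cos_nonpos_of_pi_div_two_le_of_le hθ.1
          (by linarith [hθ.2]))),
      intervalIntegral.integral_neg, integral_cos]
    norm_num [Real.sin_pi, Real.sin_pi_div_two]
  rw [← intervalIntegral.integral_add_adjacent_intervals (b := (π/2:ℝ))
    ((Real.continuous_cos.abs).intervalIntegrable _ _)
    ((Real.continuous_cos.abs).intervalIntegrable _ _),
    ← intervalIntegral.integral_add_adjacent_intervals (a := (-π:ℝ)) (b := (-(π/2):ℝ))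
    ((Real.continuous_cos.abs).intervalIntegrable _ _)
    ((Real.continuous_cos.abs).intervalIntegrable _ _), h1, h2, h3]
  norm_num


lemma polar_target : polarCoord.target = Set.Ioi (0:ℝ) ×ˢ Set.Ioo (-π) π := rfl

lemma polar_symm (p : ℝ × ℝ) :
    polarCoord.symm p = (p.1 * Real.cos p.2, p.1 * Real.sin p.2) := rfl

lemma inner_int (c r : ℝ) :
    (∫ θ in (-π)..π, r * (1 / π) *
      (r ^ 2 + 2 * c ^ 2 - 2 * c * r * (|Real.cos θ| + |Real.sin θ|)))
    = 2 * r ^ 3 + 4 * c ^ 2 * r - 16 * c * r ^ 2 / π := by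
  have key : ∀ θ : ℝ, r * (1 / π) * (r ^ 2 + 2 * c ^ 2 - 2 * c * r * (|Real.cos θ| + |Real.sin θ|))
      = (r * (1 / π) * (r ^ 2 + 2 * c ^ 2)) - ((2 * c * r ^ 2 * (1 / π)) * |Real.cos θ|
        + (2 * c * r ^ 2 * (1 / π)) * |Real.sin θ|) := fun θ => by ring
  rw [intervalIntegral.integral_congr (g := fun θ =>
      (r * (1 / π) * (r ^ 2 + 2 * c ^ 2)) - ((2 * c * r ^ 2 * (1 / π)) * |Real.cos θ|
        + (2 * c * r ^ 2 * (1 / π)) * |Real.sin θ|)) (fun θ _ => key θ),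
    intervalIntegral.integral_sub intervalIntegrable_const
      (((Real.continuous_cos.abs.intervalIntegrable _ _).const_mul _).add
        ((Real.continuous_sin.abs.intervalIntegrable _ _).const_mul _)),
    intervalIntegral.integral_add ((Real.continuous_cos.abs.intervalIntegrable _ _).const_mul _)
      ((Real.continuous_sin.abs.intervalIntegrable _ _).const_mul _)]
  simp only [intervalIntegral.integral_const_mul, int_abs_cos, int_abs_sin,
    intervalIntegral.integral_const, smul_eq_mul]
  have hπ : (π : ℝ) ≠ 0 := Real.pi_ne_zero
  field_simp
  ring

lemma disc_integral (c : ℝ) :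
    (∫ p in {p : ℝ × ℝ | p.1 ^ 2 + p.2 ^ 2 ≤ 1}, (1 / π) *
        (p.1 ^ 2 + p.2 ^ 2 + 2 * c ^ 2 - 2 * c * (|p.1| + |p.2|)))
    = 1 / 2 + 2 * c ^ 2 - 16 * c / (3 * π) := by
  have hπ : (0:ℝ) < π := Real.pi_pos
  set g : ℝ × ℝ → ℝ := fun p => (1 / π) *
    (p.1 ^ 2 + p.2 ^ 2 + 2 * c ^ 2 - 2 * c * (|p.1| + |p.2|)) with hg
  set D : Set (ℝ × ℝ) := {p : ℝ × ℝ | p.1 ^ 2 + p.2 ^ 2 ≤ 1} with hD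
  have hDm : MeasurableSet D :=
    (isClosed_le (((continuous_fst.pow 2).add (continuous_snd.pow 2))) continuous_const).measurableSet
  set F : ℝ × ℝ → ℝ := fun q =>
    q.1 * (1 / π) * (q.1 ^ 2 + 2 * c ^ 2 - 2 * c * q.1 * (|Real.cos q.2| + |Real.sin q.2|)) with hF
  have hFc : Continuous F :=
    (continuous_fst.mul continuous_const).mul
      (((continuous_fst.pow 2).add continuous_const).sub
        (((continuous_const.mul continuous_fst)).mul
          (((Real.continuous_cos.comp continuous_snd).abs).add
            ((Real.continuous_sin.comp continuous_snd).abs))))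
  have step1 : (∫ p in D, g p) = ∫ p in polarCoord.target, p.1 • (D.indicator g) (polarCoord.symm p) := by
    rw [← MeasureTheory.integral_indicator hDm, integral_comp_polarCoord_symm]
  have step2 : ∀ p ∈ polarCoord.target,
      p.1 • (D.indicator g) (polarCoord.symm p)
        = (Set.Iic (1:ℝ) ×ˢ (Set.univ : Set ℝ)).indicator F p := by
    rintro ⟨r, θ⟩ hp
    rw [polar_target] at hp
    simp only [Set.mem_prod, Set.mem_Ioi, Set.mem_Ioo] at hp
    obtain ⟨hr, -⟩ := hp
    by_cases h1 : r ≤ 1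
    · have hsq : (r * Real.cos θ) ^ 2 + (r * Real.sin θ) ^ 2 = r ^ 2 := by
        linear_combination r ^ 2 * Real.sin_sq_add_cos_sq θ
      have hD1 : ((r * Real.cos θ, r * Real.sin θ) : ℝ × ℝ) ∈ D := by
        simp only [hD, Set.mem_setOf_eq]
        rw [hsq]; nlinarith
      have hP : ((r, θ) : ℝ × ℝ) ∈ Set.Iic (1:ℝ) ×ˢ (Set.univ : Set ℝ) :=
        Set.mem_prod.mpr ⟨h1, Set.mem_univ _⟩
      rw [polar_symm, Set.indicator_of_mem hD1, Set.indicator_of_mem hP, smul_eq_mul, hg, hF]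
      simp only
      rw [abs_mul, abs_mul, abs_of_pos hr]
      linear_combination (r ^ 3 / π) * (Real.sin_sq_add_cos_sq θ)
    · have hsq : (r * Real.cos θ) ^ 2 + (r * Real.sin θ) ^ 2 = r ^ 2 := by
        linear_combination r ^ 2 * Real.sin_sq_add_cos_sq θ
      have hD1 : ((r * Real.cos θ, r * Real.sin θ) : ℝ × ℝ) ∉ D := by
        simp only [hD, Set.mem_setOf_eq, not_le]
        rw [hsq]; nlinarith
      have hP : ((r, θ) : ℝ × ℝ) ∉ Set.Iic (1:ℝ) ×ˢ (Set.univ : Set ℝ) := fun h => h1 h.1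
      rw [polar_symm, Set.indicator_of_notMem hD1, Set.indicator_of_notMem hP, smul_eq_mul,
        mul_zero]
  have hFint : IntegrableOn F (Set.Ioc (0:ℝ) 1 ×ˢ Set.Ioo (-π) π) := by
    apply (hFc.continuousOn.integrableOn_compact (isCompact_Icc.prod isCompact_Icc :
      IsCompact (Set.Icc (0:ℝ) 1 ×ˢ Set.Icc (-π) π))).mono_set
    exact Set.prod_mono Set.Ioc_subset_Icc_self Set.Ioo_subset_Icc_self
  rw [step1, setIntegral_congr_fun polarCoord.open_target.measurableSet step2,
    setIntegral_indicator (measurableSet_Iic.prod MeasurableSet.univ),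
    polar_target, Set.prod_inter_prod, Set.Ioi_inter_Iic, Set.inter_univ,
    Measure.volume_eq_prod, setIntegral_prod _ hFint]
  have inner : ∀ r ∈ Set.Ioc (0:ℝ) 1, (∫ θ in Set.Ioo (-π) π, F (r, θ))
      = 2 * r ^ 3 + 4 * c ^ 2 * r - 16 * c * r ^ 2 / π := by
    intro r _
    rw [← integral_Ioc_eq_integral_Ioo, ← intervalIntegral.integral_of_le (by linarith)]
    exact inner_int c r
  rw [setIntegral_congr_fun measurableSet_Ioc inner, ← intervalIntegral.integral_of_le
    (by norm_num : (0:ℝ) ≤ 1)]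
  have key : ∀ r : ℝ, 2 * r ^ 3 + 4 * c ^ 2 * r - 16 * c * r ^ 2 / π
      = 2 * r ^ 3 + (4 * c ^ 2) * r - (16 * c / π) * r ^ 2 := fun r => by ring
  rw [intervalIntegral.integral_congr (fun r _ => key r),
    intervalIntegral.integral_sub (((intervalIntegrable_pow 3).const_mul 2).add
      ((intervalIntegral.intervalIntegrable_id.const_mul _)))
      ((intervalIntegrable_pow 2).const_mul _),
    intervalIntegral.integral_add ((intervalIntegrable_pow 3).const_mul 2)
      (intervalIntegral.intervalIntegrable_id.const_mul _)]
  rw [intervalIntegral.integral_const_mul, intervalIntegral.integral_const_mul,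
    intervalIntegral.integral_const_mul, integral_pow, integral_pow, integral_id]
  have hπ' : (π : ℝ) ≠ 0 := Real.pi_ne_zero
  field_simp
  ring

lemma quadval (s : ℝ) : (s / (3 * π)) / ((π / 2) / (2 * π)) = 4 * s / (3 * π) := by
  have hπ' : (π:ℝ) ≠ 0 := Real.pi_ne_zero
  rw [div_div_div_comm, div_div_eq_mul_div, div_mul_eq_mul_div]
  field_simp
  ring

lemma centroidX_eq (a b : ℝ) :
    sectorCentroidX a b = ((Real.sin b - Real.sin a) / (3 * π)) / ((b - a) / (2 * π)) := by
  unfold sectorCentroidX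
  rw [numX, denom]

lemma centroidY_eq (a b : ℝ) :
    sectorCentroidY a b = ((Real.cos a - Real.cos b) / (3 * π)) / ((b - a) / (2 * π)) := by
  unfold sectorCentroidY
  rw [numY, denom]

theorem stmt_7 :
    (sectorCentroidX 0 (π / 2) = 4 / (3 * π) ∧ sectorCentroidY 0 (π / 2) = 4 / (3 * π)) ∧
    (sectorCentroidX (π / 2) π = -(4 / (3 * π)) ∧ sectorCentroidY (π / 2) π = 4 / (3 * π)) ∧
    (sectorCentroidX π (3 * π / 2) = -(4 / (3 * π)) ∧
      sectorCentroidY π (3 * π / 2) = -(4 / (3 * π))) ∧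
    (sectorCentroidX (3 * π / 2) (2 * π) = 4 / (3 * π) ∧
      sectorCentroidY (3 * π / 2) (2 * π) = -(4 / (3 * π))) ∧
    (∫ p in {p : ℝ × ℝ | p.1 ^ 2 + p.2 ^ 2 ≤ 1}, (1 / π) *
        min
          (min ((p.1 - 4 / (3 * π)) ^ 2 + (p.2 - 4 / (3 * π)) ^ 2)
            ((p.1 + 4 / (3 * π)) ^ 2 + (p.2 - 4 / (3 * π)) ^ 2))
          (min ((p.1 + 4 / (3 * π)) ^ 2 + (p.2 + 4 / (3 * π)) ^ 2)
            ((p.1 - 4 / (3 * π)) ^ 2 + (p.2 + 4 / (3 * π)) ^ 2))) =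
      (9 * π ^ 2 - 64) / (18 * π ^ 2) := by
  have hπ : (0:ℝ) < π := Real.pi_pos
  have hπ' : (π:ℝ) ≠ 0 := ne_of_gt hπ
  refine ⟨⟨?_, ?_⟩, ⟨?_, ?_⟩, ⟨?_, ?_⟩, ⟨?_, ?_⟩, ?_⟩
  · rw [centroidX_eq, Real.sin_pi_div_two, Real.sin_zero,
      show (π/2 - 0 : ℝ) = π/2 from by ring, quadval]
    ring
  · rw [centroidY_eq, Real.cos_pi_div_two, Real.cos_zero,
      show (π/2 - 0 : ℝ) = π/2 from by ring, quadval]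
    ring
  · rw [centroidX_eq, Real.sin_pi, Real.sin_pi_div_two,
      show (π - π/2 : ℝ) = π/2 from by ring, quadval]
    ring
  · rw [centroidY_eq, Real.cos_pi, Real.cos_pi_div_two,
      show (π - π/2 : ℝ) = π/2 from by ring, quadval]
    ring
  · rw [centroidX_eq, sin_three_pi_div_two', Real.sin_pi,
      show (3*π/2 - π : ℝ) = π/2 from by ring, quadval]
    ring
  · rw [centroidY_eq, cos_three_pi_div_two', Real.cos_pi,
      show (3*π/2 - π : ℝ) = π/2 from by ring, quadval]
    ring
  · rw [centroidX_eq, Real.sin_two_pi, sin_three_pi_div_two',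
      show (2*π - 3*π/2 : ℝ) = π/2 from by ring, quadval]
    ring
  · rw [centroidY_eq, Real.cos_two_pi, cos_three_pi_div_two',
      show (2*π - 3*π/2 : ℝ) = π/2 from by ring, quadval]
    ring
  · have hc : (0:ℝ) ≤ 4 / (3 * π) := by positivity
    have hDm : MeasurableSet {p : ℝ × ℝ | p.1 ^ 2 + p.2 ^ 2 ≤ 1} :=
      (isClosed_le (((continuous_fst.pow 2).add (continuous_snd.pow 2)))
        continuous_const).measurableSet
    rw [MeasureTheory.setIntegral_congr_fun hDm
      (fun p _ => by rw [min_four (4 / (3 * π)) p.1 p.2 hc]), disc_integral]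
    field_simp
    ring
end

section
/- For the uniform distribution on the unit square [0,1]², the distortion error of the two-point set {(1/3, 1/3), (2/3, 2/3)} equals 1/9, which is strictly greater than the distortion error 5/48 of the set {(1/4, 1/2), (3/4, 1/2)}. -/
open Real MeasureTheory intervalIntegral

lemma sq_int (a b c : ℝ) :
    (∫ x in a..b, (x - c) ^ 2) = ((b - c) ^ 3 - (a - c) ^ 3) / 3 := by
  rw [intervalIntegral.integral_comp_sub_right (fun x => x ^ 2) c, integral_pow]
  norm_num

lemma inner_int_s11 (C a b d : ℝ) :
    (∫ x in a..b, (C + (x - d) ^ 2)) =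
      C * (b - a) + ((b - d) ^ 3 - (a - d) ^ 3) / 3 := by
  rw [intervalIntegral.integral_add intervalIntegrable_const
      (Continuous.intervalIntegrable
        (by continuity : Continuous fun x : ℝ => (x - d) ^ 2) a b),
    sq_int, intervalIntegral.integral_const, smul_eq_mul, mul_comm]

lemma cubic_int (p q r s a b : ℝ) :
    (∫ x in a..b, (p * x ^ 3 + q * x ^ 2 + r * x ^ 1 + s)) =
      p * (b ^ 4 - a ^ 4) / 4 + q * (b ^ 3 - a ^ 3) / 3 +
        r * (b ^ 2 - a ^ 2) / 2 + s * (b - a) := by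
  have c1 : Continuous fun x : ℝ => p * x ^ 3 := by continuity
  have c2 : Continuous fun x : ℝ => q * x ^ 2 := by continuity
  have c3 : Continuous fun x : ℝ => r * x ^ 1 := by continuity
  rw [intervalIntegral.integral_add
      ((by fun_prop : Continuous fun x : ℝ => p * x ^ 3 + q * x ^ 2 + r * x ^ 1).intervalIntegrable a b) intervalIntegrable_const,
    intervalIntegral.integral_add ((by fun_prop : Continuous fun x : ℝ => p * x ^ 3 + q * x ^ 2).intervalIntegrable a b)
      (c3.intervalIntegrable a b),
    intervalIntegral.integral_add (c1.intervalIntegrable a b)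
      (c2.intervalIntegrable a b)]
  simp only [intervalIntegral.integral_const_mul, integral_pow,
    _root_.intervalIntegral.integral_const, integral_id, smul_eq_mul]
  ring

theorem stmt_11 :
    (∫ x₁ in (0:ℝ)..1, ∫ x₂ in (0:ℝ)..(1 - x₁),
        ((x₁ - 1/3) ^ 2 + (x₂ - 1/3) ^ 2)) +
    (∫ x₁ in (0:ℝ)..1, ∫ x₂ in (1 - x₁)..1,
        ((x₁ - 2/3) ^ 2 + (x₂ - 2/3) ^ 2)) = 1 / 9 ∧
    (∫ x₁ in (0:ℝ)..(1/2), ∫ x₂ in (0:ℝ)..1,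
        ((x₁ - 1/4) ^ 2 + (x₂ - 1/2) ^ 2)) +
    (∫ x₁ in (1/2:ℝ)..1, ∫ x₂ in (0:ℝ)..1,
        ((x₁ - 3/4) ^ 2 + (x₂ - 1/2) ^ 2)) = 5 / 48 ∧
    (5 : ℝ) / 48 < 1 / 9 := by
  refine ⟨?_, ?_, by norm_num⟩
  · simp only [inner_int_s11]
    rw [show (fun x₁ : ℝ => (x₁ - 1/3) ^ 2 * (1 - x₁ - 0) +
        ((1 - x₁ - 1/3) ^ 3 - (0 - 1/3) ^ 3) / 3) = fun x : ℝ =>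
        (-4/3 : ℝ) * x ^ 3 + (7/3) * x ^ 2 + (-11/9) * x ^ 1 + (2/9 : ℝ) from by
      funext x; ring]
    rw [show (fun x₁ : ℝ => (x₁ - 2/3) ^ 2 * (1 - (1 - x₁)) +
        ((1 - 2/3) ^ 3 - (1 - x₁ - 2/3) ^ 3) / 3) = fun x : ℝ =>
        (4/3 : ℝ) * x ^ 3 + (-5/3) * x ^ 2 + (5/9) * x ^ 1 + (0 : ℝ) from by
      funext x; ring]
    rw [cubic_int, cubic_int]; norm_num
  · simp only [inner_int_s11]
    rw [show (fun x₁ : ℝ => (x₁ - 1/4) ^ 2 * (1 - 0) +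
        ((1 - 1/2) ^ 3 - (0 - 1/2) ^ 3) / 3) = fun x : ℝ =>
        (0 : ℝ) * x ^ 3 + (1 : ℝ) * x ^ 2 + (-1/2) * x ^ 1 + (1/16 + 1/12 : ℝ) from by
      funext x; ring]
    rw [show (fun x₁ : ℝ => (x₁ - 3/4) ^ 2 * (1 - 0) +
        ((1 - 1/2) ^ 3 - (0 - 1/2) ^ 3) / 3) = fun x : ℝ =>
        (0 : ℝ) * x ^ 3 + (1 : ℝ) * x ^ 2 + (-3/2) * x ^ 1 + (9/16 + 1/12 : ℝ) from by
      funext x; ring]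
    rw [cubic_int, cubic_int]; norm_num
end

section
/- Let P be the distribution on ℝ with density f(x) = 2/5 on [0,1/2], 8/5 on (1/2,1], 0 otherwise. The four-point distortion error D(a₁,a₂,a₃,a₄) = ∫₀^{(a₁+a₂)/2}(2/5)(x−a₁)²dx + ∫_{(a₁+a₂)/2}^{1/2}(2/5)(x−a₂)²dx + ∫_{1/2}^{(a₂+a₃)/2}(8/5)(x−a₂)²dx + ∫_{(a₂+a₃)/2}^{(a₃+a₄)/2}(8/5)(x−a₃)²dx + ∫_{(a₃+a₄)/2}^{1}(8/5)(x−a₄)²dx, over 0 < a₁ < (a₁+a₂)/2 < 1/2 < a₂ < a₃ < a₄ < 1, attains its minimum 1465/330672 at (a₁,a₂,a₃,a₄) = (59/332, 177/332, 239/332, 301/332). -/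
open Real MeasureTheory intervalIntegral

/-- Distortion error of the four-point set `{a₁,a₂,a₃,a₄}` for the distribution with density
`2/5` on `[0,1/2]` and `8/5` on `(1/2,1]`, in the configuration where only the first
Voronoi midpoint and `a₁` lie below `1/2`. -/
noncomputable def D4 (a₁ a₂ a₃ a₄ : ℝ) : ℝ :=
  (∫ x in (0:ℝ)..((a₁ + a₂)/2), (2/5) * (x - a₁) ^ 2) +
  (∫ x in ((a₁ + a₂)/2)..(1/2), (2/5) * (x - a₂) ^ 2) +
  (∫ x in (1/2:ℝ)..((a₂ + a₃)/2), (8/5) * (x - a₂) ^ 2) +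
  (∫ x in ((a₂ + a₃)/2)..((a₃ + a₄)/2), (8/5) * (x - a₃) ^ 2) +
  (∫ x in ((a₃ + a₄)/2)..1, (8/5) * (x - a₄) ^ 2)

lemma integ_sq (c a p q : ℝ) :
    (∫ x in p..q, c * (x - a) ^ 2) = c * ((q - a) ^ 3 - (p - a) ^ 3) / 3 := by
  rw [intervalIntegral.integral_const_mul,
    intervalIntegral.integral_comp_sub_right (fun x => x ^ 2) a, integral_pow]
  ring

lemma D4_eq (a₁ a₂ a₃ a₄ : ℝ) :
    D4 a₁ a₂ a₃ a₄ =
      (2/15) * a₁ ^ 3 + (1/30) * (a₂ - a₁) ^ 3 + (2/5) * (a₂ - 1/2) ^ 3 +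
      (2/15) * (a₃ - a₂) ^ 3 + (2/15) * (a₄ - a₃) ^ 3 + (8/15) * (1 - a₄) ^ 3 := by
  simp only [D4, integ_sq]
  ring

theorem stmt_18 :
    (0 < (59:ℝ)/332 ∧ (59:ℝ)/332 < ((59:ℝ)/332 + 177/332)/2 ∧
      ((59:ℝ)/332 + 177/332)/2 < 1/2 ∧ (1:ℝ)/2 < 177/332 ∧
      (177:ℝ)/332 < 239/332 ∧ (239:ℝ)/332 < 301/332 ∧ (301:ℝ)/332 < 1) ∧
    D4 (59/332) (177/332) (239/332) (301/332) = 1465 / 330672 ∧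
    ∀ a₁ a₂ a₃ a₄ : ℝ, 0 < a₁ → a₁ < (a₁ + a₂)/2 → (a₁ + a₂)/2 < 1/2 →
      1/2 < a₂ → a₂ < a₃ → a₃ < a₄ → a₄ < 1 →
      1465 / 330672 ≤ D4 a₁ a₂ a₃ a₄ := by
  refine ⟨by norm_num, by rw [D4_eq]; norm_num, ?_⟩
  intro a₁ a₂ a₃ a₄ h0 h1 h2 h3 h4 h5 h6
  rw [D4_eq]
  have t1 : (0:ℝ) ≤ (a₁ - 59/332) ^ 2 * (a₁ + 2 * (59/332)) := by
    apply mul_nonneg (sq_nonneg _); nlinarith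
  have t2 : (0:ℝ) ≤ ((a₂ - a₁) - 118/332) ^ 2 * ((a₂ - a₁) + 2 * (118/332)) := by
    apply mul_nonneg (sq_nonneg _); nlinarith
  have t3 : (0:ℝ) ≤ ((a₂ - 1/2) - 11/332) ^ 2 * ((a₂ - 1/2) + 2 * (11/332)) := by
    apply mul_nonneg (sq_nonneg _); nlinarith
  have t4 : (0:ℝ) ≤ ((a₃ - a₂) - 62/332) ^ 2 * ((a₃ - a₂) + 2 * (62/332)) := by
    apply mul_nonneg (sq_nonneg _); nlinarith
  have t5 : (0:ℝ) ≤ ((a₄ - a₃) - 62/332) ^ 2 * ((a₄ - a₃) + 2 * (62/332)) := by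
    apply mul_nonneg (sq_nonneg _); nlinarith
  have t6 : (0:ℝ) ≤ ((1 - a₄) - 31/332) ^ 2 * ((1 - a₄) + 2 * (31/332)) := by
    apply mul_nonneg (sq_nonneg _); nlinarith
  have key : (2/15) * a₁ ^ 3 + (1/30) * (a₂ - a₁) ^ 3 + (2/5) * (a₂ - 1/2) ^ 3 +
      (2/15) * (a₃ - a₂) ^ 3 + (2/15) * (a₄ - a₃) ^ 3 + (8/15) * (1 - a₄) ^ 3
      - 1465 / 330672 =
      (2/15) * ((a₁ - 59/332) ^ 2 * (a₁ + 2 * (59/332))) +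
      (1/30) * (((a₂ - a₁) - 118/332) ^ 2 * ((a₂ - a₁) + 2 * (118/332))) +
      (2/5) * (((a₂ - 1/2) - 11/332) ^ 2 * ((a₂ - 1/2) + 2 * (11/332))) +
      (2/15) * (((a₃ - a₂) - 62/332) ^ 2 * ((a₃ - a₂) + 2 * (62/332))) +
      (2/15) * (((a₄ - a₃) - 62/332) ^ 2 * ((a₄ - a₃) + 2 * (62/332))) +
      (8/15) * (((1 - a₄) - 31/332) ^ 2 * ((1 - a₄) + 2 * (31/332))) := by ring
  linarith
end
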